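/- Let U, W ⊆ Kⁿ be K-vector subspaces of the same dimension. Then the set of all γ ∈ Γ with the property that for every u ∈ U there exists w ∈ W with v(u − w) ≤ v(u)·γ has a minimum (so the distance Δ(U, W) is well defined). -/
import Mathlib


noncomputable section

open scoped Classical Pointwise

section Preamble

variable {K : Type*} [Field K] {Γ : Type*} [LinearOrderedCommGroupWithZero Γ]

instance (priority := 100) : OrderBot Γ where
  bot := 0
  bot_le _ := zero_le'

/-- The max-valuation on `K^n`: `v(a) = maxᵢ v(aᵢ)`. -/
def vv (v : Valuation K Γ) {n : ℕ} (x : Fin n → K) : Γ :=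
  Finset.univ.sup fun i => v (x i)

/-- `rvEq v x y` expresses `rv(x) = rv(y)` in `RV⁽ⁿ⁾ = Kⁿ/∼`, where
`x ∼ y` iff `v(x−y) < v(x)` or `x = y = 0`. -/
def rvEq (v : Valuation K Γ) {n : ℕ} (x y : Fin n → K) : Prop :=
  vv v (x - y) < vv v x ∨ (x = 0 ∧ y = 0)

/-- Balls in `K` (with `K` itself counting as a ball). -/
def IsBall1 (v : Valuation K Γ) (B : Set K) : Prop :=
  B = Set.univ ∨ ∃ a : K, ∃ γ : Γ, γ ≠ 0 ∧
    (B = {x | v (x - a) < γ} ∨ B = {x | v (x - a) ≤ γ})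

/-- Balls in `Kⁿ` (with `Kⁿ` itself counting as a ball). -/
def IsBall (v : Valuation K Γ) {n : ℕ} (B : Set (Fin n → K)) : Prop :=
  B = Set.univ ∨ ∃ a : Fin n → K, ∃ γ : Γ, γ ≠ 0 ∧
    (B = {x | vv v (x - a) < γ} ∨ B = {x | vv v (x - a) ≤ γ})

/-- Spherical completeness: every nonempty chain of balls in `K` has nonempty
intersection. -/
def SphericallyComplete (v : Valuation K Γ) : Prop :=
  ∀ C : Set (Set K), C.Nonempty → (∀ B ∈ C, IsBall1 v B) → IsChain (· ⊆ ·) C →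
    (⋂ B ∈ C, B).Nonempty

/-- The residue field `K̄` of the valuation ring `𝒪 = {x | v x ≤ 1}`. -/
def Kbar (v : Valuation K Γ) : Type _ :=
  IsLocalRing.ResidueField v.valuationSubring

instance (v : Valuation K Γ) : Field (Kbar v) :=
  inferInstanceAs (Field (IsLocalRing.ResidueField v.valuationSubring))

/-- The residue map `res : 𝒪 → K̄`, extended by the junk value `0` outside `𝒪`. -/
def res' (v : Valuation K Γ) (x : K) : Kbar v :=
  if h : v x ≤ 1 then IsLocalRing.residue v.valuationSubring ⟨x, h⟩ else 0

/-- The coordinatewise residue map on `Kⁿ`. -/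
def resv (v : Valuation K Γ) {n : ℕ} (x : Fin n → K) : Fin n → Kbar v :=
  fun i => res' v (x i)

/-- `res(S)` for a set `S ⊆ Kⁿ`: the set of residues of points of `S ∩ 𝒪ⁿ`. -/
def resSet (v : Valuation K Γ) {n : ℕ} (S : Set (Fin n → K)) : Set (Fin n → Kbar v) :=
  resv v '' {x ∈ S | ∀ i, v (x i) ≤ 1}

/-- `dir(x) = res(K·x) ⊆ K̄ⁿ`. -/
def dirSet (v : Valuation K Γ) {n : ℕ} (x : Fin n → K) : Set (Fin n → Kbar v) :=
  resSet v {y | ∃ c : K, y = c • x}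

/-- The coordinate projection `Kⁿ → K^d` selecting the coordinates `σ 0 < σ 1 < ⋯`. -/
def proj {A : Type*} {n d : ℕ} (σ : Fin d → Fin n) (x : Fin n → A) : Fin d → A :=
  fun k => x (σ k)

/-- `σ` (a strictly increasing selection of `d` of the `n` coordinates) is an
exhibition of the `K̄`-subspace `Ū ⊆ K̄ⁿ` if the corresponding coordinate projection
`K̄ⁿ → K̄^d` restricts to an isomorphism from `Ū` onto `K̄^d`. -/
def IsExhibition (v : Valuation K Γ) {n d : ℕ} (σ : Fin d → Fin n)
    (Ubar : Submodule (Kbar v) (Fin n → Kbar v)) : Prop :=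
  StrictMono σ ∧ Set.BijOn (proj σ) (Ubar : Set (Fin n → Kbar v)) Set.univ

/-- `affdir(C)`: the `K̄`-subspace of `K̄ⁿ` generated by all `dir(x − x')`, `x, x' ∈ C`. -/
def affdir (v : Valuation K Γ) {n : ℕ} (C : Set (Fin n → K)) :
    Submodule (Kbar v) (Fin n → Kbar v) :=
  Submodule.span (Kbar v) (⋃ x ∈ C, ⋃ x' ∈ C, dirSet v (x - x'))

/-- A matrix has entries in the valuation ring `𝒪`. -/
def EntriesInO (v : Valuation K Γ) {n : ℕ} (M : Matrix (Fin n) (Fin n) K) : Prop :=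
  ∀ i j, v (M i j) ≤ 1

/-- `M ∈ GLₙ(𝒪)`: `M` is invertible, with entries in `𝒪`, and its inverse also has
entries in `𝒪`. -/
def MemGLO (v : Valuation K Γ) {n : ℕ} (M : Matrix (Fin n) (Fin n) K) : Prop :=
  EntriesInO v M ∧ ∃ N : Matrix (Fin n) (Fin n) K,
    M * N = 1 ∧ N * M = 1 ∧ EntriesInO v N

/-- The entrywise residue matrix of `M`. -/
def resM (v : Valuation K Γ) {n : ℕ} (M : Matrix (Fin n) (Fin n) K) :
    Matrix (Fin n) (Fin n) (Kbar v) :=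
  fun i j => res' v (M i j)

/-- `DeltaLE v U W γ` expresses `Δ(U, W) ≤ γ`: for every `u ∈ U` there is `w ∈ W`
with `v(u − w) ≤ v(u)·γ`. -/
def DeltaLE (v : Valuation K Γ) {n : ℕ} (U W : Submodule K (Fin n → K)) (γ : Γ) : Prop :=
  ∀ u ∈ U, ∃ w ∈ W, vv v (u - w) ≤ vv v u * γ

/-- `IsDelta v U W γ` expresses `Δ(U, W) = γ`: `γ` is the minimum of all admissible
bounds. -/
def IsDelta (v : Valuation K Γ) {n : ℕ} (U W : Submodule K (Fin n → K)) (γ : Γ) : Prop :=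
  DeltaLE v U W γ ∧ ∀ δ : Γ, DeltaLE v U W δ → γ ≤ δ

end Preamble

variable {K : Type*} [Field K] {Γ : Type*} [LinearOrderedCommGroupWithZero Γ]


section MyAux

variable {K : Type*} [Field K] {Γ : Type*} [LinearOrderedCommGroupWithZero Γ]

lemma vv_le {v : Valuation K Γ} {n : ℕ} {x : Fin n → K} {γ : Γ}
    (h : ∀ i, v (x i) ≤ γ) : vv v x ≤ γ :=
  Finset.sup_le fun i _ => h i

lemma le_vv (v : Valuation K Γ) {n : ℕ} (x : Fin n → K) (i : Fin n) :
    v (x i) ≤ vv v x :=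
  Finset.le_sup (f := fun i => v (x i)) (Finset.mem_univ i)

lemma vv_zero (v : Valuation K Γ) {n : ℕ} : vv v (0 : Fin n → K) = 0 := by
  refine le_antisymm (vv_le fun i => ?_) zero_le'
  simp

lemma eq_zero_of_vv_eq_zero {v : Valuation K Γ} {n : ℕ} {x : Fin n → K}
    (h : vv v x = 0) : x = 0 := by
  funext i
  have h1 : v (x i) ≤ 0 := h ▸ le_vv v x i
  have h2 : v (x i) = 0 := le_antisymm h1 zero_le'
  simpa using v.zero_iff.mp h2

lemma vv_add_le (v : Valuation K Γ) {n : ℕ} (x y : Fin n → K) :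
    vv v (x + y) ≤ max (vv v x) (vv v y) :=
  vv_le fun i => le_trans (v.map_add _ _) (max_le_max (le_vv v x i) (le_vv v y i))

lemma vv_neg (v : Valuation K Γ) {n : ℕ} (x : Fin n → K) :
    vv v (-x) = vv v x := by
  unfold vv
  congr 1
  funext i
  simp

lemma vv_smul (v : Valuation K Γ) {n : ℕ} (c : K) (x : Fin n → K) :
    vv v (c • x) = v c * vv v x := by
  apply le_antisymm
  · refine vv_le fun i => ?_
    have : v ((c • x) i) = v c * v (x i) := by
      simp [v.map_mul]
    rw [this]
    exact mul_le_mul_right (le_vv v x i) _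
  · rcases eq_or_ne (v c) 0 with h | h
    · simp [h]
    · have h1 : vv v x ≤ (v c)⁻¹ * vv v (c • x) := by
        refine vv_le fun i => ?_
        have h2 : v (x i) = (v c)⁻¹ * v ((c • x) i) := by
          simp [v.map_mul, ← mul_assoc, inv_mul_cancel₀ h]
        rw [h2]
        exact mul_le_mul_right (le_vv v (c • x) i) _
      calc v c * vv v x ≤ v c * ((v c)⁻¹ * vv v (c • x)) := mul_le_mul_right h1 _
        _ = vv v (c • x) := mul_inv_cancel_left₀ h _

/-- Key orthogonality lemma: if `y i = 0` and coordinate `i` realizes the max for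
`u`, then `y` and `u` are "orthogonal". -/
lemma vv_orth (v : Valuation K Γ) {n : ℕ} {u y : Fin n → K} {i : Fin n}
    (hy : y i = 0) (hu : v (u i) = vv v u) (c : K) :
    vv v (y + c • u) = max (vv v y) (v c * vv v u) := by
  apply le_antisymm
  · refine le_trans (vv_add_le v y (c • u)) ?_
    rw [vv_smul]
  · rcases le_or_gt (vv v y) (v c * vv v u) with h | h
    · rw [max_eq_right h]
      have hval : v ((y + c • u) i) = v c * vv v u := by
        have : (y + c • u) i = c * u i := by simp [hy]
        rw [this, v.map_mul, hu]
      calc v c * vv v u = v ((y + c • u) i) := hval.symm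
        _ ≤ vv v (y + c • u) := le_vv _ _ _
    · rw [max_eq_left h.le]
      have hy' : y = (y + c • u) + (-(c • u)) := by abel
      have h2 : vv v y ≤ max (vv v (y + c • u)) (vv v (c • u)) := by
        calc vv v y = vv v ((y + c • u) + (-(c • u))) := by rw [← hy']
          _ ≤ max (vv v (y + c • u)) (vv v (-(c • u))) := vv_add_le _ _ _
          _ = max (vv v (y + c • u)) (vv v (c • u)) := by rw [vv_neg]
      rcases max_cases (vv v (y + c • u)) (vv v (c • u)) with ⟨he, _⟩ | ⟨he, _⟩
      · rwa [he] at h2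
      · rw [he, vv_smul] at h2
        exact absurd (lt_of_le_of_lt h2 h) (lt_irrefl _)

lemma max_mul' (a b c : Γ) : max a b * c = max (a * c) (b * c) := by
  rcases le_total a b with h | h
  · rw [max_eq_right h, max_eq_right (mul_le_mul_left h c)]
  · rw [max_eq_left h, max_eq_left (mul_le_mul_left h c)]

/-- Distance from a point to a finite-dimensional subspace is attained. -/
lemma exists_best (v : Valuation K Γ) {n : ℕ} :
    ∀ (d : ℕ) (W : Submodule K (Fin n → K)) (a : Fin n → K),
      Module.finrank K W ≤ d →
      ∃ w₀ ∈ W, ∀ w ∈ W, vv v (a - w₀) ≤ vv v (a - w) := by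
  have hbot : ∀ (W : Submodule K (Fin n → K)) (a : Fin n → K), W = ⊥ →
      ∃ w₀ ∈ W, ∀ w ∈ W, vv v (a - w₀) ≤ vv v (a - w) := by
    rintro W a rfl
    refine ⟨0, Submodule.zero_mem _, fun w hw => ?_⟩
    rw [Submodule.mem_bot] at hw
    rw [hw]
  intro d
  induction d with
  | zero =>
    intro W a h
    have hW : W = ⊥ := Submodule.finrank_eq_zero.mp (Nat.le_zero.mp h)
    exact hbot W a hW
  | succ d ih =>
    intro W a h
    rcases eq_or_ne W ⊥ with hW | hW
    · exact hbot W a hW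
    · obtain ⟨u, huW, hune⟩ := Submodule.ne_bot_iff W |>.mp hW
      have hvvu : vv v u ≠ 0 := fun h0 => hune (eq_zero_of_vv_eq_zero h0)
      obtain ⟨j, hj⟩ := Function.ne_iff.mp hune
      obtain ⟨i, -, hi⟩ := Finset.exists_mem_eq_sup (Finset.univ : Finset (Fin n))
        ⟨j, Finset.mem_univ j⟩ (fun i => v (u i))
      have hui : v (u i) = vv v u := hi.symm
      have huine : u i ≠ 0 := by
        intro h0
        rw [h0] at hui
        exact hvvu (by rw [← hui]; simp)
      set W' : Submodule K (Fin n → K) := W ⊓ LinearMap.ker (LinearMap.proj (R := K) i)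
        with hW'def
      have hW'le : W' ≤ W := inf_le_left
      have huW' : u ∉ W' := by
        intro hmem
        have : u i = 0 := hmem.2
        exact huine this
      have hlt : W' < W := lt_of_le_of_ne hW'le (fun he => huW' (he ▸ huW))
      have hrank : Module.finrank K W' < Module.finrank K W :=
        Submodule.finrank_lt_finrank_of_lt hlt
      have hrank' : Module.finrank K W' ≤ d := by omega
      set c₀ : K := a i / u i with hc₀
      set b : Fin n → K := a - c₀ • u with hb
      have hbi : b i = 0 := by
        simp [hb, hc₀, div_mul_cancel₀ _ huine]
      obtain ⟨x₀, hx₀mem, hx₀⟩ := ih W' b hrank'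
      refine ⟨c₀ • u + x₀, W.add_mem (W.smul_mem c₀ huW) (hW'le hx₀mem), fun w hw => ?_⟩
      have key1 : a - (c₀ • u + x₀) = b - x₀ := by rw [hb]; abel
      set z : Fin n → K := w - c₀ • u with hz
      have hzW : z ∈ W := W.sub_mem hw (W.smul_mem c₀ huW)
      set c : K := z i / u i with hc
      set x' : Fin n → K := z - c • u with hx'
      have hx'W' : x' ∈ W' := by
        constructor
        · exact W.sub_mem hzW (W.smul_mem c huW)
        · show x' i = 0
          simp [hx', hc, div_mul_cancel₀ _ huine]
      have hbx'i : (b - x') i = 0 := by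
        have : x' i = 0 := hx'W'.2
        simp [hbi, this]
      have key2 : a - w = (b - x') + (-c) • u := by
        rw [hb, hx', hz, neg_smul]; abel
      rw [key1, key2, vv_orth v hbx'i hui (-c)]
      calc vv v (b - x₀) ≤ vv v (b - x') := hx₀ x' hx'W'
        _ ≤ max (vv v (b - x')) (v (-c) * vv v u) := le_max_left _ _

/-- Main induction: existence of the minimum, by induction on `finrank U`. -/
lemma delta_aux (v : Valuation K Γ) {n : ℕ} :
    ∀ (d : ℕ) (U W : Submodule K (Fin n → K)), Module.finrank K U ≤ d →
      ∃ γ : Γ, IsDelta v U W γ := by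
  have hbot : ∀ (U W : Submodule K (Fin n → K)), U = ⊥ → ∃ γ : Γ, IsDelta v U W γ := by
    rintro U W rfl
    refine ⟨0, fun x hx => ?_, fun δ _ => zero_le'⟩
    rw [Submodule.mem_bot] at hx
    refine ⟨0, Submodule.zero_mem _, ?_⟩
    rw [hx]
    simp [vv_zero]
  intro d
  induction d with
  | zero =>
    intro U W h
    exact hbot U W (Submodule.finrank_eq_zero.mp (Nat.le_zero.mp h))
  | succ d ih =>
    intro U W h
    rcases eq_or_ne U ⊥ with hU | hU
    · exact hbot U W hU
    · obtain ⟨u, huU, hune⟩ := Submodule.ne_bot_iff U |>.mp hU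
      have hvvu : vv v u ≠ 0 := fun h0 => hune (eq_zero_of_vv_eq_zero h0)
      obtain ⟨j, hj⟩ := Function.ne_iff.mp hune
      obtain ⟨i, -, hi⟩ := Finset.exists_mem_eq_sup (Finset.univ : Finset (Fin n))
        ⟨j, Finset.mem_univ j⟩ (fun i => v (u i))
      have hui : v (u i) = vv v u := hi.symm
      have huine : u i ≠ 0 := by
        intro h0
        rw [h0] at hui
        exact hvvu (by rw [← hui]; simp)
      set U' : Submodule K (Fin n → K) := U ⊓ LinearMap.ker (LinearMap.proj (R := K) i)
        with hU'def
      have hU'le : U' ≤ U := inf_le_left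
      have huU' : u ∉ U' := fun hmem => huine hmem.2
      have hlt : U' < U := lt_of_le_of_ne hU'le (fun he => huU' (he ▸ huU))
      have hrank : Module.finrank K U' < Module.finrank K U :=
        Submodule.finrank_lt_finrank_of_lt hlt
      have hrank' : Module.finrank K U' ≤ d := by omega
      obtain ⟨γ', hγ'⟩ := ih U' W hrank'
      obtain ⟨w₀, hw₀W, hbest⟩ := exists_best v (Module.finrank K W) W u le_rfl
      set δ₀ : Γ := (vv v u)⁻¹ * vv v (u - w₀) with hδ₀
      have hδ₀eq : vv v (u - w₀) = vv v u * δ₀ := by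
        rw [hδ₀, mul_inv_cancel_left₀ hvvu]
      refine ⟨max γ' δ₀, ?_, ?_⟩
      · -- DeltaLE
        intro x hx
        set c : K := x i / u i with hc
        set x' : Fin n → K := x - c • u with hx'
        have hx'U' : x' ∈ U' := by
          constructor
          · exact U.sub_mem hx (U.smul_mem c huU)
          · show x' i = 0
            simp [hx', hc, div_mul_cancel₀ _ huine]
        have hx'i : x' i = 0 := hx'U'.2
        obtain ⟨w', hw'W, hw'⟩ := hγ'.1 x' hx'U'
        refine ⟨c • w₀ + w', W.add_mem (W.smul_mem c hw₀W) hw'W, ?_⟩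
        have key : x - (c • w₀ + w') = c • (u - w₀) + (x' - w') := by
          rw [hx', smul_sub]; abel
        have hxval : vv v x = max (vv v x') (v c * vv v u) := by
          have hxe : x = x' + c • u := by rw [hx']; abel
          rw [hxe]
          exact vv_orth v hx'i hui c
        rw [key]
        calc vv v (c • (u - w₀) + (x' - w'))
            ≤ max (vv v (c • (u - w₀))) (vv v (x' - w')) := vv_add_le _ _ _
          _ = max (v c * vv v (u - w₀)) (vv v (x' - w')) := by rw [vv_smul]
          _ ≤ max (v c * (vv v u * δ₀)) (vv v x' * γ') := by
              exact max_le_max (by rw [hδ₀eq]) hw'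
          _ ≤ max (v c * vv v u * (max γ' δ₀)) (vv v x' * (max γ' δ₀)) := by
              refine max_le_max ?_ ?_
              · rw [mul_assoc]
                exact mul_le_mul_right (mul_le_mul_right (le_max_right _ _) _) _
              · exact mul_le_mul_right (le_max_left _ _) _
          _ = max (v c * vv v u) (vv v x') * (max γ' δ₀) := by
              rw [max_mul', max_comm (v c * vv v u * max γ' δ₀)]
          _ = vv v x * (max γ' δ₀) := by rw [hxval, max_comm (vv v x')]
      · -- minimality
        intro δ hδ
        have h1 : γ' ≤ δ := hγ'.2 δ (fun y hy => hδ y (hU'le hy))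
        have h2 : δ₀ ≤ δ := by
          obtain ⟨w, hwW, hw⟩ := hδ u huU
          have h3 : vv v u * δ₀ ≤ vv v u * δ := by
            rw [← hδ₀eq]
            exact le_trans (hbest w hwW) hw
          calc δ₀ = (vv v u)⁻¹ * (vv v u * δ₀) := by rw [inv_mul_cancel_left₀ hvvu]
            _ ≤ (vv v u)⁻¹ * (vv v u * δ) := mul_le_mul_right h3 _
            _ = δ := by rw [inv_mul_cancel_left₀ hvvu]
        exact max_le h1 h2

end MyAux

/-- for subspaces `U, W ⊆ Kⁿ` of the same dimension, the set of
admissible bounds `γ` (i.e. such that every `u ∈ U` is `v(u)·γ`-approximated by some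
`w ∈ W`) has a minimum, so `Δ(U, W)` is well defined. -/
theorem delta_well_defined
    (v : Valuation K Γ) {n : ℕ} (U W : Submodule K (Fin n → K))
    (hdim : Module.finrank K U = Module.finrank K W) :
    ∃ γ : Γ, IsDelta v U W γ := by
  exact delta_aux v (Module.finrank K U) U W le_rfl

end
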